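/- Let L be a strongly continuous domain. Then every prime element U ≠ L of the lattice σ_s(L) has the form L \ ↓a for some a ∈ L; consequently (L, σ_s(L)) is a sober space. -/

import Mathlib

open Set

variable {L : Type*}

/-- A directed subset: nonempty and directed under `≤`. -/
def DirSet [Preorder L] (D : Set L) : Prop := D.Nonempty ∧ DirectedOn (· ≤ ·) D

/-- Strongly Scott open sets (the family `σ^s(L)`). -/
def StronglyScottOpen [Preorder L] [SupSet L] (U : Set L) : Prop :=
  IsUpperSet U ∧ ∀ D : Set L, DirSet D → ∀ x : L,
    Ici (sSup D) ∩ Ici x ⊆ U → ∃ d ∈ D, Ici d ∩ Ici x ⊆ U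

/-- The strong Scott topology `σ_s(L)`, generated by the strongly Scott open sets. -/
def strongScott (L : Type*) [Preorder L] [SupSet L] : TopologicalSpace L :=
  TopologicalSpace.generateFrom {U | StronglyScottOpen U}

/-- Scott open sets. -/
def ScottOpen [Preorder L] [SupSet L] (U : Set L) : Prop :=
  IsUpperSet U ∧ ∀ D : Set L, DirSet D → sSup D ∈ U → (D ∩ U).Nonempty

/-- The Scott topology `σ(L)`. -/
def scottTop (L : Type*) [Preorder L] [SupSet L] : TopologicalSpace L :=
  TopologicalSpace.generateFrom {U | ScottOpen U}

/-- The upper topology `υ(L)`. -/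
def upperTop (L : Type*) [Preorder L] : TopologicalSpace L :=
  TopologicalSpace.generateFrom {U | ∃ x : L, U = (Iic x)ᶜ}

/-- The lower topology `ω(L)`. -/
def lowerTop (L : Type*) [Preorder L] : TopologicalSpace L :=
  TopologicalSpace.generateFrom {U | ∃ x : L, U = (Ici x)ᶜ}

/-- The strong way-below relation `x ≪_s y`. -/
def SWayBelow [Preorder L] (x y : L) : Prop :=
  ∀ D : Set L, DirSet D → ∀ a : L,
    (⋂ d ∈ D, Ici d) ∩ Ici a ⊆ Ici y → ∃ d ∈ D, Ici d ∩ Ici a ⊆ Ici x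

/-- The way-below relation `x ≪ y`. -/
def WayBelow [Preorder L] [SupSet L] (x y : L) : Prop :=
  ∀ D : Set L, DirSet D → y ≤ sSup D → ∃ d ∈ D, x ≤ d

/-- `X` with topology `t` is a C-space (w.r.t. the order of `L`). -/
def IsCSpace [Preorder L] (t : TopologicalSpace L) : Prop :=
  ∀ U : Set L, @IsOpen _ (t) U → ∀ x ∈ U, ∃ y ∈ U,
    x ∈ @interior L t (Ici y) ∧ Ici y ⊆ U

/-- `L` is a strongly continuous domain. -/
def StronglyContinuousDomain (L : Type*) [Preorder L] [SupSet L] : Prop :=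
  IsCSpace (strongScott L)

/-- `L` is a continuous domain. -/
def ContinuousDomain (L : Type*) [Preorder L] [SupSet L] : Prop :=
  ∀ x : L, DirSet {y | WayBelow y x} ∧ IsLUB {y | WayBelow y x} x

/-- `L` is a hypercontinuous domain. -/
def HypercontinuousDomain (L : Type*) [Preorder L] : Prop :=
  ∀ x : L, DirSet {y | x ∈ @interior L (upperTop L) (Ici y)} ∧
    IsLUB {y | x ∈ @interior L (upperTop L) (Ici y)} x

/-- The strong Lawson topology `λ_s(L)`: common refinement of `σ_s(L)` and `ω(L)`. -/
def strongLawson (L : Type*) [Preorder L] [SupSet L] : TopologicalSpace L :=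
  TopologicalSpace.generateFrom
    {U | @IsOpen _ (strongScott L) U ∨ @IsOpen _ (lowerTop L) U}

/-!
For a closed set `A` with prime complement, let `D` be the set of those `u` for which `int ↑u`
meets `A`. Primeness and the C-space property make `D` directed, and since `L \ A` is Scott open,
`a := sup D` lies in `A`, so `↓a ⊆ A`. Conversely, if some `x ∈ A` were not below `a`, the C-space
property applied to the open set `L \ ↓a` would give `y ≰ a` with `x ∈ int ↑y`, i.e. `y ∈ D`.
Hence `A = ↓a`, the closure of `a`. This works for every C-space topology on a dcpo that lies
between the upper and the Scott topology, as `σ_s(L)` does.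
-/

section PrimeOpen

variable {X : Type*} [TopologicalSpace X]

def IsPrimeOpen (U : Set X) : Prop :=
  ∀ V W : Set X, IsOpen V → IsOpen W → V ∩ W ⊆ U → V ⊆ U ∨ W ⊆ U

lemma IsPreirreducible.isPrimeOpen_compl {S : Set X} (hS : IsPreirreducible S) :
    IsPrimeOpen Sᶜ := by
  intro V W hV hW hVW
  by_contra! h
  obtain ⟨v, hvV, hvS⟩ := not_subset.mp h.1
  obtain ⟨w, hwW, hwS⟩ := not_subset.mp h.2
  obtain ⟨z, hzS, hzVW⟩ := hS V W hV hW ⟨v, not_not.mp hvS, hvV⟩ ⟨w, not_not.mp hwS, hwW⟩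
  exact hVW hzVW hzS

end PrimeOpen

lemma StronglyScottOpen.scottOpen [CompletePartialOrder L] {U : Set L}
    (hU : StronglyScottOpen U) : ScottOpen U := by
  refine ⟨hU.1, fun D hD hsU => ?_⟩
  have hsub : Ici (sSup D) ∩ Ici ⊥ ⊆ U := fun _ hz => hU.1 hz.1 hsU
  obtain ⟨d, hd, hdU⟩ := hU.2 D hD ⊥ hsub
  exact ⟨d, hd, hdU ⟨le_rfl, bot_le⟩⟩

lemma ScottOpen.inter [Preorder L] [SupSet L] {U V : Set L} (hU : ScottOpen U)
    (hV : ScottOpen V) : ScottOpen (U ∩ V) := by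
  refine ⟨hU.1.inter hV.1, fun D hD hs => ?_⟩
  obtain ⟨d₁, hd₁, hd₁U⟩ := hU.2 D hD hs.1
  obtain ⟨d₂, hd₂, hd₂V⟩ := hV.2 D hD hs.2
  obtain ⟨d, hd, hd₁d, hd₂d⟩ := hD.2 d₁ hd₁ d₂ hd₂
  exact ⟨d, hd, hU.1 hd₁d hd₁U, hV.1 hd₂d hd₂V⟩

lemma scottOpen_sUnion [Preorder L] [SupSet L] {S : Set (Set L)}
    (hS : ∀ U ∈ S, ScottOpen U) : ScottOpen (⋃₀ S) := by
  refine ⟨isUpperSet_sUnion fun U hU => (hS U hU).1, fun D hD ⟨U, hUS, hsU⟩ => ?_⟩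
  obtain ⟨d, hd, hdU⟩ := (hS U hUS).2 D hD hsU
  exact ⟨d, hd, U, hUS, hdU⟩

lemma scottOpen_of_isOpen_strongScott [CompletePartialOrder L] {U : Set L}
    (hU : @IsOpen _ (strongScott L) U) : ScottOpen U := by
  induction hU with
  | basic U hU => exact StronglyScottOpen.scottOpen hU
  | univ => exact ⟨isUpperSet_univ, fun D hD _ => by simpa using hD.1⟩
  | inter U V _ _ hU hV => exact hU.inter hV
  | sUnion S _ hS => exact scottOpen_sUnion hS

lemma stronglyScottOpen_compl_Iic [CompletePartialOrder L] (x : L) :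
    StronglyScottOpen (Iic x)ᶜ := by
  refine ⟨(isLowerSet_Iic x).compl, fun D hD a hsub => ?_⟩
  by_contra! h
  have hmeet : ∀ d ∈ D, d ≤ x ∧ a ≤ x := fun d hd => by
    obtain ⟨z, hz, hzx⟩ := not_subset.mp (h d hd)
    exact ⟨hz.1.trans (not_not.mp hzx), hz.2.trans (not_not.mp hzx)⟩
  obtain ⟨d₀, hd₀⟩ := hD.1
  have hsx : sSup D ≤ x := hD.2.sSup_le fun d hd => (hmeet d hd).1
  exact hsub ⟨hsx, (hmeet d₀ hd₀).2⟩ le_rfl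

lemma isOpen_strongScott_compl_Iic [CompletePartialOrder L] (x : L) :
    @IsOpen _ (strongScott L) (Iic x)ᶜ :=
  .basic _ (stronglyScottOpen_compl_Iic x)

section CSpace

variable [TopologicalSpace L]

lemma closure_singleton_eq_Iic_of_upper [Preorder L]
    (hupper : ∀ U : Set L, IsOpen U → IsUpperSet U) (hIic : ∀ x : L, IsOpen (Iic x)ᶜ) (a : L) :
    closure {a} = Iic a := by
  refine Subset.antisymm ?_ fun b hb => ?_
  · exact closure_minimal (singleton_subset_iff.mpr le_rfl) (isOpen_compl_iff.mp (hIic a))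
  · by_contra hb'
    exact hupper _ isClosed_closure.isOpen_compl hb hb' (subset_closure rfl)

lemma t0Space_of_closure_singleton_eq_Iic [PartialOrder L]
    (h : ∀ a : L, closure {a} = Iic a) : T0Space L :=
  (t0Space_iff_inseparable L).mpr fun a b hab =>
    Iic_inj.mp (by rw [← h, ← h]; exact inseparable_iff_closure_eq.mp hab)

def approximants [Preorder L] (A : Set L) : Set L := {u | (interior (Ici u) ∩ A).Nonempty}

lemma approximants_nonempty [Preorder L] (hC : IsCSpace ‹TopologicalSpace L›) {A : Set L}
    (hA : A.Nonempty) : (approximants A).Nonempty := by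
  obtain ⟨x, hx⟩ := hA
  obtain ⟨u, -, hxu, -⟩ := hC univ isOpen_univ x trivial
  exact ⟨u, x, hxu, hx⟩

lemma approximants_subset [Preorder L] {A : Set L} (hA : IsLowerSet A) : approximants A ⊆ A :=
  fun _ ⟨_, hxu, hxA⟩ => hA (interior_subset hxu) hxA

lemma directedOn_approximants [Preorder L] (hC : IsCSpace ‹TopologicalSpace L›) {A : Set L}
    (hA : IsPrimeOpen Aᶜ) : DirectedOn (· ≤ ·) (approximants A) := by
  rintro u ⟨x, hxu, hxA⟩ v ⟨y, hyv, hyA⟩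
  have hmeet : ¬ interior (Ici u) ∩ interior (Ici v) ⊆ Aᶜ := fun h => by
    rcases hA _ _ isOpen_interior isOpen_interior h with h | h
    exacts [h hxu hxA, h hyv hyA]
  obtain ⟨z, hz, hzA⟩ := not_subset.mp hmeet
  obtain ⟨w, hw, hzw, -⟩ := hC _ (isOpen_interior.inter isOpen_interior) z hz
  exact ⟨w, ⟨z, hzw, not_not.mp hzA⟩, interior_subset hw.1, interior_subset hw.2⟩

variable [CompletePartialOrder L]

lemma IsClosed.eq_Iic_sSup_approximants (hC : IsCSpace ‹TopologicalSpace L›)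
    (hScott : ∀ U : Set L, IsOpen U → ScottOpen U) (hIic : ∀ x : L, IsOpen (Iic x)ᶜ)
    {A : Set L} (hA : IsClosed A) (hprime : IsPrimeOpen Aᶜ) (hne : A.Nonempty) :
    A = Iic (sSup (approximants A)) := by
  set D := approximants A
  have hdir : DirectedOn (· ≤ ·) D := directedOn_approximants hC hprime
  have hlow : IsLowerSet A := by simpa using (hScott _ hA.isOpen_compl).1.compl
  have hsA : sSup D ∈ A := by
    by_contra hsA
    obtain ⟨d, hd, hdA⟩ := (hScott _ hA.isOpen_compl).2 D ⟨approximants_nonempty hC hne, hdir⟩ hsA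
    exact hdA (approximants_subset hlow hd)
  refine Subset.antisymm (fun x hxA => ?_) fun x hx => hlow hx hsA
  by_contra hxs
  obtain ⟨y, hys, hxy, -⟩ := hC _ (hIic (sSup D)) x hxs
  exact hys (hdir.le_sSup ⟨x, hxy, hxA⟩)

lemma quasiSober_of_isCSpace (hC : IsCSpace ‹TopologicalSpace L›)
    (hScott : ∀ U : Set L, IsOpen U → ScottOpen U) (hIic : ∀ x : L, IsOpen (Iic x)ᶜ) :
    QuasiSober L := by
  refine ⟨fun {S} hS hSc => ⟨sSup (approximants S), ?_⟩⟩
  rw [IsGenericPoint, closure_singleton_eq_Iic_of_upper (fun U hU => (hScott U hU).1) hIic]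
  exact (hSc.eq_Iic_sSup_approximants hC hScott hIic hS.isPreirreducible.isPrimeOpen_compl
    hS.nonempty).symm

end CSpace

theorem strongScott_primes_and_sober [CompletePartialOrder L]
    (hL : StronglyContinuousDomain L) :
    (∀ U : Set L, @IsOpen _ (strongScott L) U → U ≠ univ →
        (∀ V W : Set L, @IsOpen _ (strongScott L) V →
          @IsOpen _ (strongScott L) W → V ∩ W ⊆ U → V ⊆ U ∨ W ⊆ U) →
        ∃ a : L, U = (Iic a)ᶜ) ∧
    @T0Space L (strongScott L) ∧ @QuasiSober L (strongScott L) := by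
  let _ := strongScott L
  have hScott : ∀ U : Set L, IsOpen U → ScottOpen U := fun _ => scottOpen_of_isOpen_strongScott
  have hupper : ∀ U : Set L, IsOpen U → IsUpperSet U := fun U hU => (hScott U hU).1
  refine ⟨fun U hU hne hprime => ?_, ?_, ?_⟩
  · have hprime' : IsPrimeOpen Uᶜᶜ := by rwa [compl_compl]
    have hUc := hU.isClosed_compl.eq_Iic_sSup_approximants hL hScott isOpen_strongScott_compl_Iic
      hprime' (nonempty_compl.mpr hne)
    exact ⟨_, (compl_eq_comm.mp hUc).symm⟩
  · exact t0Space_of_closure_singleton_eq_Iic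
      (closure_singleton_eq_Iic_of_upper hupper isOpen_strongScott_compl_Iic)
  · exact quasiSober_of_isCSpace hL hScott isOpen_strongScott_compl_Iic
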